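/- arXiv:2401.17757 — 3 statements merged into one kernel-verified Lean document; each statement's English description precedes it below -/
import Mathlib

section
/- Let A = Q Λ Qᵀ ∈ ℝ^{n×n} be symmetric, where Q is orthogonal and Λ = diag(λ_1,…,λ_n) with λ_1 ≤ … ≤ λ_n symmetric about λ̄ (λ_j + λ_{n+1−j} = 2λ̄ for all j). Let v ∈ ℝ^n be a unit vector such that μ = Qᵀ v is an absolute palindrome. Suppose m ≤ n and that unit vectors v_1,…,v_m ∈ ℝ^n, reals α_1,…,α_m, and positive reals β_1,…,β_{m−1} satisfy the Lanczos recurrence: v_1 = v; α_k = v_kᵀ A v_k for k = 1,…,m; u_2 = A v_1 − α_1 v_1 and u_{k+1} = A v_k − α_k v_k − β_{k−1} v_{k−1} for k = 2,…,m−1; β_k = ‖u_{k+1}‖₂ ≠ 0 and v_{k+1} = u_{k+1}/β_k for k = 1,…,m−1. Then α_k = λ̄ for every k = 1,…,m; i.e., the Jacobi matrix T_m generated by the m-step Lanczos iteration has constant diagonal entries λ̄. -/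
open Matrix

/-- A vector `w ∈ ℝ^n` is an absolute palindrome if `|w_i| = |w_{n+1-i}|`
(0-based: `|w i| = |w i.rev|`). -/
def AbsPalindrome {n : ℕ} (w : Fin n → ℝ) : Prop :=
  ∀ i : Fin n, |w i| = |w i.rev|

/-!
Since `|μ_i| = |μ_{n+1-i}|`, a signed reversal `P` (with `P e_j = ±e_{n+1-j}`) fixes `μ = Qᵀv`,
and since the spectrum is symmetric about `λ̄`, `P` anticommutes with `Λ - λ̄`. Hence the
orthogonal matrix `R = QPQᵀ` fixes `v` and anticommutes with `A - λ̄`. The three-term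
recurrence then gives `R v_k = (-1)^(k-1) v_k` by induction, and for a unit vector `w` with
`Rw = ±w` orthogonality and anticommutation give `wᵀ(A - λ̄)w = -wᵀ(A - λ̄)w`, so `α_k = λ̄`.
-/

namespace Matrix

section Anticomm

variable {ι K : Type*} [Fintype ι] [CommRing K] {R B : Matrix ι ι K} {x y : ι → K} {ε : K}

theorem mulVec_mulVec_eq_neg_smul_of_anticomm (hRB : R * B = -(B * R))
    (hx : R *ᵥ x = ε • x) : R *ᵥ B *ᵥ x = -ε • B *ᵥ x := by
  rw [mulVec_mulVec, hRB, neg_mulVec, ← mulVec_mulVec, hx, mulVec_smul, neg_smul]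

variable [DecidableEq ι] {A : Matrix ι ι K} {c : K}

theorem mulVec_sub_smul_of_anticomm (hRA : R * (A - c • 1) = -((A - c • 1) * R))
    (hx : R *ᵥ x = ε • x) : R *ᵥ (A *ᵥ x - c • x) = -ε • (A *ᵥ x - c • x) := by
  simpa [sub_mulVec, smul_mulVec] using mulVec_mulVec_eq_neg_smul_of_anticomm hRA hx

theorem mulVec_sub_smul_sub_smul_of_anticomm (hRA : R * (A - c • 1) = -((A - c • 1) * R))
    (hx : R *ᵥ x = ε • x) (hy : R *ᵥ y = -ε • y) (β : K) :
    R *ᵥ (A *ᵥ x - c • x - β • y) = -ε • (A *ᵥ x - c • x - β • y) := by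
  rw [mulVec_sub, mulVec_sub_smul_of_anticomm hRA hx, mulVec_smul, hy]
  module

theorem dotProduct_mulVec_eq_zero_of_anticomm [IsAddTorsionFree K] (hR : Rᵀ * R = 1)
    (hRB : R * B = -(B * R)) (hε : ε * ε = 1) (hx : R *ᵥ x = ε • x) : x ⬝ᵥ B *ᵥ x = 0 := by
  have horth : (R *ᵥ x) ⬝ᵥ R *ᵥ B *ᵥ x = x ⬝ᵥ B *ᵥ x := by
    rw [dotProduct_mulVec, ← vecMul_transpose, vecMul_vecMul, hR, vecMul_one]
  rw [hx, mulVec_mulVec_eq_neg_smul_of_anticomm hRB hx, smul_dotProduct, dotProduct_smul,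
    smul_smul, mul_neg, hε, neg_smul, one_smul] at horth
  exact self_eq_neg.mp horth.symm

theorem dotProduct_mulVec_eq_of_anticomm [IsAddTorsionFree K] (hR : Rᵀ * R = 1)
    (hRA : R * (A - c • 1) = -((A - c • 1) * R)) (hx1 : x ⬝ᵥ x = 1) (hε : ε * ε = 1)
    (hx : R *ᵥ x = ε • x) : x ⬝ᵥ A *ᵥ x = c := by
  have h := dotProduct_mulVec_eq_zero_of_anticomm hR hRA hε hx
  rwa [sub_mulVec, smul_mulVec, one_mulVec, dotProduct_sub, dotProduct_smul, hx1, smul_eq_mul,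
    mul_one, sub_eq_zero] at h

variable {Q P : Matrix ι ι K}

theorem transpose_conj_mul_conj (hQ : Qᵀ * Q = 1) (hP : Pᵀ * P = 1) :
    (Q * P * Qᵀ)ᵀ * (Q * P * Qᵀ) = 1 := by
  have hQ' : Q * Qᵀ = 1 := mul_eq_one_comm.mp hQ
  simp only [transpose_mul, transpose_transpose, Matrix.mul_assoc]
  rw [← Matrix.mul_assoc Qᵀ Q, hQ, Matrix.one_mul, ← Matrix.mul_assoc Pᵀ, hP, Matrix.one_mul, hQ']

theorem conj_mul_conj_of_anticomm (hQ : Qᵀ * Q = 1) (hPB : P * B = -(B * P)) :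
    (Q * P * Qᵀ) * (Q * B * Qᵀ) = -((Q * B * Qᵀ) * (Q * P * Qᵀ)) := by
  have h (M N : Matrix ι ι K) : (Q * M * Qᵀ) * (Q * N * Qᵀ) = Q * (M * N) * Qᵀ := by
    simp only [Matrix.mul_assoc]
    rw [← Matrix.mul_assoc Qᵀ Q, hQ, Matrix.one_mul]
  rw [h, h, hPB, Matrix.mul_neg, Matrix.neg_mul]

theorem conj_diagonal_sub_smul_one (hQ : Qᵀ * Q = 1) (d : ι → K) (c : K) :
    Q * diagonal d * Qᵀ - c • 1 = Q * diagonal (fun i => d i - c) * Qᵀ := by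
  rw [← diagonal_sub, ← smul_one_eq_diagonal, Matrix.mul_sub, Matrix.sub_mul, Matrix.mul_smul,
    Matrix.smul_mul, Matrix.mul_one, mul_eq_one_comm.mp hQ]

end Anticomm

section SignedReversal

variable {n : ℕ}

def signedReversal (s : Fin n → ℝ) : Matrix (Fin n) (Fin n) ℝ :=
  of fun i j => if j = i.rev then s i else 0

theorem signedReversal_mulVec_apply (s x : Fin n → ℝ) (i : Fin n) :
    (signedReversal s *ᵥ x) i = s i * x i.rev := by
  simp [signedReversal, mulVec, dotProduct]

theorem transpose_signedReversal_mul_self {s : Fin n → ℝ} (hs : ∀ i, s i * s i = 1) :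
    (signedReversal s)ᵀ * signedReversal s = 1 := by
  ext i j
  rw [mul_apply, Finset.sum_eq_single i.rev]
  · by_cases hij : i = j
    · simp [signedReversal, hij, hs, one_apply]
    · simp [signedReversal, hij, Ne.symm hij]
  · intro k _ hk
    have : i ≠ k.rev := fun h => hk (by rw [h, Fin.rev_rev])
    simp [signedReversal, this]
  · simp

theorem signedReversal_mul_diagonal (s : Fin n → ℝ) {d : Fin n → ℝ}
    (hd : ∀ i, d i.rev = -d i) :
    signedReversal s * diagonal d = -(diagonal d * signedReversal s) := by
  ext i j
  by_cases hj : j = i.rev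
  · simp only [signedReversal, hj, mul_diagonal, diagonal_mul, of_apply, ↓reduceIte, hd,
      neg_apply]
    ring
  · simp [signedReversal, hj]

end SignedReversal

end Matrix

theorem AbsPalindrome.exists_signedReversal_mulVec_eq {n : ℕ} {w : Fin n → ℝ}
    (hw : AbsPalindrome w) :
    ∃ s : Fin n → ℝ, (∀ i, s i * s i = 1) ∧ signedReversal s *ᵥ w = w := by
  refine ⟨fun i => if w i = w i.rev then 1 else -1, fun i => ?_, ?_⟩
  · dsimp only
    split_ifs <;> norm_num
  ext i
  rw [signedReversal_mulVec_apply]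
  by_cases h : w i = w i.rev
  · simp [h]
  · rw [if_neg h, (abs_eq_abs.mp (hw i)).resolve_left h, neg_one_mul]

theorem exists_orthogonal_fixing_anticomm {n : ℕ} {Q : Matrix (Fin n) (Fin n) ℝ}
    (hQ : Qᵀ * Q = 1) {lam : Fin n → ℝ} {c : ℝ} (hsym : ∀ j, lam j + lam j.rev = 2 * c)
    {v : Fin n → ℝ} (hpal : AbsPalindrome (Qᵀ *ᵥ v)) :
    ∃ R : Matrix (Fin n) (Fin n) ℝ, Rᵀ * R = 1 ∧ R *ᵥ v = v ∧
      R * (Q * diagonal lam * Qᵀ - c • 1) = -((Q * diagonal lam * Qᵀ - c • 1) * R) := by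
  obtain ⟨s, hs, hsv⟩ := hpal.exists_signedReversal_mulVec_eq
  refine ⟨Q * signedReversal s * Qᵀ, transpose_conj_mul_conj hQ
    (transpose_signedReversal_mul_self hs), ?_, ?_⟩
  · rw [← mulVec_mulVec, ← mulVec_mulVec, hsv, mulVec_mulVec, mul_eq_one_comm.mp hQ, one_mulVec]
  · rw [conj_diagonal_sub_smul_one hQ]
    exact conj_mul_conj_of_anticomm hQ
      (signedReversal_mul_diagonal s fun i => by linarith [hsym i])

theorem stmt11_general (n m : ℕ)
    (Q : Matrix (Fin n) (Fin n) ℝ) (hQ : Qᵀ * Q = 1)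
    (lam : Fin n → ℝ)
    (lamBar : ℝ) (hsym : ∀ j : Fin n, lam j + lam j.rev = 2 * lamBar)
    (A : Matrix (Fin n) (Fin n) ℝ) (hA : A = Q * Matrix.diagonal lam * Qᵀ)
    (v : Fin n → ℝ)
    (hpal : AbsPalindrome (Qᵀ.mulVec v))
    -- the Lanczos recurrence (1-based indexing `k = 1, …, m`)
    (vv u : ℕ → Fin n → ℝ) (a b : ℕ → ℝ)
    (hv1 : vv 1 = v)
    (hunit : ∀ k, 1 ≤ k → k ≤ m → vv k ⬝ᵥ vv k = 1)
    (ha : ∀ k, 1 ≤ k → k ≤ m → a k = vv k ⬝ᵥ A.mulVec (vv k))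
    (hu2 : u 2 = A.mulVec (vv 1) - a 1 • vv 1)
    (hu : ∀ k, 2 ≤ k → k + 1 ≤ m →
      u (k + 1) = A.mulVec (vv k) - a k • vv k - b (k - 1) • vv (k - 1))
    (hvk : ∀ k, 1 ≤ k → k + 1 ≤ m → vv (k + 1) = (b k)⁻¹ • u (k + 1)) :
    ∀ k, 1 ≤ k → k ≤ m → a k = lamBar := by
  obtain ⟨R, hR, hRv, hRA⟩ := exists_orthogonal_fixing_anticomm hQ hsym hpal
  rw [← hA] at hRA
  have hα : ∀ k, 1 ≤ k → k ≤ m → R *ᵥ vv k = (-1 : ℝ) ^ (k + 1) • vv k → a k = lamBar :=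
    fun k hk hkm hRk => (ha k hk hkm).trans <| dotProduct_mulVec_eq_of_anticomm hR hRA
      (hunit k hk hkm) (by rw [← mul_pow]; norm_num) hRk
  have hparity : ∀ k, 1 ≤ k → k ≤ m → R *ᵥ vv k = (-1 : ℝ) ^ (k + 1) • vv k := by
    intro k
    induction k using Nat.strong_induction_on with | _ k ih => ?_
    intro hk hkm
    obtain rfl | rfl | hk3 : k = 1 ∨ k = 2 ∨ 3 ≤ k := by omega
    · simpa [hv1] using hRv
    · have h1 := ih 1 (by omega) le_rfl (by omega)
      rw [hvk 1 le_rfl hkm, hu2, hα 1 le_rfl (by omega) h1, mulVec_smul,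
        mulVec_sub_smul_of_anticomm hRA h1, smul_comm]
      congr 1
      ring
    · obtain ⟨j, rfl⟩ := Nat.exists_eq_add_of_le' hk3
      have h1 := ih (j + 1) (by omega) (by omega) (by omega)
      have h2 := ih (j + 2) (by omega) (by omega) (by omega)
      rw [hvk (j + 2) (by omega) hkm, hu (j + 2) (by omega) hkm,
        hα (j + 2) (by omega) (by omega) h2, show j + 2 - 1 = j + 1 from rfl, mulVec_smul,
        mulVec_sub_smul_sub_smul_of_anticomm hRA h2, smul_comm]
      · congr 1
        ring
      · rw [h1]
        congr 1
        ring
  exact fun k hk hkm => hα k hk hkm (hparity k hk hkm)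

/-- If `A = QΛQᵀ` has eigenvalues symmetric about `λ̄` and the starting unit
vector `v` is such that `μ = Qᵀv` is an absolute palindrome, then all the
diagonal entries `α_k` of the Jacobi matrix generated by the `m`-step Lanczos
iteration equal `λ̄`. -/
theorem stmt11 (n m : ℕ) (hm : 1 ≤ m) (hmn : m ≤ n)
    (Q : Matrix (Fin n) (Fin n) ℝ) (hQ : Qᵀ * Q = 1)
    (lam : Fin n → ℝ) (hmono : Monotone lam)
    (lamBar : ℝ) (hsym : ∀ j : Fin n, lam j + lam j.rev = 2 * lamBar)
    (A : Matrix (Fin n) (Fin n) ℝ) (hA : A = Q * Matrix.diagonal lam * Qᵀ)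
    (v : Fin n → ℝ) (hv : v ⬝ᵥ v = 1)
    (hpal : AbsPalindrome (Qᵀ.mulVec v))
    -- the Lanczos recurrence (1-based indexing `k = 1, …, m`)
    (vv u : ℕ → Fin n → ℝ) (a b : ℕ → ℝ)
    (hv1 : vv 1 = v)
    (hunit : ∀ k, 1 ≤ k → k ≤ m → vv k ⬝ᵥ vv k = 1)
    (ha : ∀ k, 1 ≤ k → k ≤ m → a k = vv k ⬝ᵥ A.mulVec (vv k))
    (hu2 : u 2 = A.mulVec (vv 1) - a 1 • vv 1)
    (hu : ∀ k, 2 ≤ k → k + 1 ≤ m →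
      u (k + 1) = A.mulVec (vv k) - a k • vv k - b (k - 1) • vv (k - 1))
    (hb : ∀ k, 1 ≤ k → k + 1 ≤ m → b k = Real.sqrt (u (k + 1) ⬝ᵥ u (k + 1)))
    (hbne : ∀ k, 1 ≤ k → k + 1 ≤ m → b k ≠ 0)
    (hbpos : ∀ k, 1 ≤ k → k + 1 ≤ m → 0 < b k)
    (hvk : ∀ k, 1 ≤ k → k + 1 ≤ m → vv (k + 1) = (b k)⁻¹ • u (k + 1)) :
    ∀ k, 1 ≤ k → k ≤ m → a k = lamBar :=
  stmt11_general n m Q hQ lam lamBar hsym A hA v hpal vv u a b hv1 hunit ha hu2 hu hvk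
end

section
/- Let A = Q Λ Qᵀ ∈ ℝ^{n×n} be symmetric, where Q is orthogonal and Λ = diag(λ_1,…,λ_n) with λ_1 ≤ … ≤ λ_n symmetric about λ̄ (λ_j + λ_{n+1−j} = 2λ̄ for all j). Let v ∈ ℝ^n be a unit vector such that μ = Qᵀ v is an absolute palindrome. Let m ≤ n and let T_m ∈ ℝ^{m×m} be the Jacobi matrix produced by the m-step Lanczos method applied to A with starting vector v (assuming all β_1,…,β_{m−1} are nonzero). Then the m Ritz values (eigenvalues of T_m) are symmetric about λ̄, and the quadrature weights corresponding to pairs of symmetric quadrature nodes are equal: there is an ordering θ_1 ≤ … ≤ θ_m of the eigenvalues of T_m with corresponding orthonormal eigenvectors w_1,…,w_m such that θ_k + θ_{m+1−k} = 2λ̄ and ((w_k)_1)² = ((w_{m+1−k})_1)² for all k = 1,…,m. -/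
open Matrix

/-!
Since `λ` is symmetric about `λ̄` and `|μ|` is a palindrome, a signed reversal `P` fixes `μ` and
conjugates `Λ` into `2λ̄ - Λ`, so `S = Q P Qᵀ` is a symmetric matrix with `S v = v` and
`S A = (2λ̄ - A) S`. Inductively the Lanczos vectors satisfy `S v_k = (-1)^(k+1) v_k`, whence
`α_k = v_kᵀ A v_k = v_kᵀ S A S v_k = 2λ̄ - α_k`, i.e. `T_m` has constant diagonal `λ̄`.

For such a Jacobi matrix the sign flip `D = diag((-1)^i)` satisfies `T D = D (2λ̄ - T)`, so `D w`
is an eigenvector for `2λ̄ - θ` whenever `w` is one for `θ`. Since the off-diagonal entries are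
nonzero, an eigenvector is determined up to scale by its first component, which `D` preserves.
Hence the Ritz values are simple and symmetric about `λ̄`, and `D w_k = ± w_{m+1-k}`, which gives
equal weights.
-/

lemma AbsPalindrome.exists_signed_reversal {n : ℕ} {μ : Fin n → ℝ}
    (hμ : AbsPalindrome μ) :
    ∃ P : Matrix (Fin n) (Fin n) ℝ, Pᵀ = P ∧
      (∀ d : Fin n → ℝ, P * diagonal d = diagonal (fun i => d i.rev) * P) ∧ P *ᵥ μ = μ := by
  classical
  -- `μ i = ε i * μ i.rev` with `ε i = ±1`
  set ε : Fin n → ℝ := fun i => if μ i.rev = μ i then 1 else -1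
  have hε : ∀ i, ε i.rev = ε i := by simp [ε, eq_comm]
  refine ⟨of fun i j => if j = i.rev then ε i else 0, ?_, fun d => ?_, ?_⟩
  · ext i j
    by_cases h : j = i.rev
    · simp [h, hε]
    · have h' : i ≠ j.rev := fun e => h (by rw [e, Fin.rev_rev])
      simp [h, h']
  · ext i j
    by_cases h : j = i.rev <;> simp [mul_diagonal, diagonal_mul, h, mul_comm]
  · ext i
    simp only [mulVec, dotProduct, of_apply, ite_mul, zero_mul, Finset.sum_ite_eq',
      Finset.mem_univ, if_true, ε]
    by_cases h : μ i.rev = μ i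
    · simp [h]
    · rcases abs_eq_abs.mp (hμ i) with h' | h'
      · exact absurd h'.symm h
      · simp [h']

lemma exists_reflection_of_absPalindrome {n : ℕ} {Q : Matrix (Fin n) (Fin n) ℝ}
    (hQ : Qᵀ * Q = 1) {lam : Fin n → ℝ} {c : ℝ} (hsym : ∀ j, lam j + lam j.rev = 2 * c)
    {v : Fin n → ℝ} (hpal : AbsPalindrome (Qᵀ *ᵥ v)) :
    ∃ S : Matrix (Fin n) (Fin n) ℝ, Sᵀ = S ∧
      S * (Q * diagonal lam * Qᵀ) = ((2 * c) • 1 - Q * diagonal lam * Qᵀ) * S ∧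
      S *ᵥ v = v := by
  obtain ⟨P, hPt, hPΛ, hPμ⟩ := hpal.exists_signed_reversal
  have hQ' : ∀ M, Qᵀ * (Q * M) = M := fun M => by rw [← Matrix.mul_assoc, hQ, Matrix.one_mul]
  have hrev : diagonal (fun i => lam i.rev) = (2 * c) • 1 - diagonal lam := by
    ext i j
    by_cases h : i = j
    · simp only [h, diagonal_apply_eq, Matrix.sub_apply, Matrix.smul_apply, one_apply_eq,
        smul_eq_mul, mul_one]
      linarith [hsym j]
    · simp [h]
  refine ⟨Q * P * Qᵀ, ?_, ?_, ?_⟩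
  · rw [transpose_mul, transpose_mul, transpose_transpose, hPt, Matrix.mul_assoc]
  · calc Q * P * Qᵀ * (Q * diagonal lam * Qᵀ) = Q * (P * diagonal lam) * Qᵀ := by
          simp only [Matrix.mul_assoc, hQ']
      _ = ((2 * c) • 1 - Q * diagonal lam * Qᵀ) * (Q * P * Qᵀ) := by
          rw [hPΛ, hrev]
          simp only [sub_mul, mul_sub, Matrix.smul_mul, Matrix.mul_smul, Matrix.one_mul,
            Matrix.mul_assoc, hQ']
  · rw [← mulVec_mulVec, ← mulVec_mulVec, hPμ, mulVec_mulVec, mul_eq_one_comm.mp hQ, one_mulVec]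

section Reflection

variable {ι : Type*} [Fintype ι] [DecidableEq ι] {S A : Matrix ι ι ℝ} {c s : ℝ} {x : ι → ℝ}

lemma mulVec_mulVec_of_mul_eq (hSA : S * A = ((2 * c) • 1 - A) * S) (x : ι → ℝ) :
    S *ᵥ (A *ᵥ x) = (2 * c) • (S *ᵥ x) - A *ᵥ (S *ᵥ x) := by
  rw [mulVec_mulVec, hSA, ← mulVec_mulVec, sub_mulVec, smul_mulVec, one_mulVec]

lemma dotProduct_mulVec_eq_of_mul_eq (hS : Sᵀ = S) (hSA : S * A = ((2 * c) • 1 - A) * S)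
    (hx : x ⬝ᵥ x = 1) (hSx : S *ᵥ x = s • x) (hs : s ≠ 0) : x ⬝ᵥ A *ᵥ x = c := by
  have h : s * (x ⬝ᵥ A *ᵥ x) = s * (2 * c - x ⬝ᵥ A *ᵥ x) := calc
    s * (x ⬝ᵥ A *ᵥ x) = x ⬝ᵥ S *ᵥ (A *ᵥ x) := by
      rw [dotProduct_mulVec x S, ← hS, vecMul_transpose, hSx, smul_dotProduct, smul_eq_mul]
    _ = s * (2 * c - x ⬝ᵥ A *ᵥ x) := by
      rw [mulVec_mulVec_of_mul_eq hSA, hSx, mulVec_smul, dotProduct_sub, dotProduct_smul,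
        dotProduct_smul, dotProduct_smul, hx, smul_eq_mul, smul_eq_mul, smul_eq_mul]
      ring
  linarith [mul_left_cancel₀ hs h]

lemma mulVec_sub_smul_of_mul_eq (hSA : S * A = ((2 * c) • 1 - A) * S) (hSx : S *ᵥ x = s • x) :
    S *ᵥ (A *ᵥ x - c • x) = -s • (A *ᵥ x - c • x) := by
  rw [mulVec_sub, mulVec_mulVec_of_mul_eq hSA, mulVec_smul, hSx, mulVec_smul]
  module

end Reflection

lemma lanczos_mulVec_eq_neg_one_pow_and_eq {n m : ℕ} {S A : Matrix (Fin n) (Fin n) ℝ} {c : ℝ}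
    (hS : Sᵀ = S) (hSA : S * A = ((2 * c) • 1 - A) * S)
    {vv u : ℕ → Fin n → ℝ} {a b : ℕ → ℝ} (hSv : S *ᵥ vv 1 = vv 1)
    (hunit : ∀ k, 1 ≤ k → k ≤ m → vv k ⬝ᵥ vv k = 1)
    (ha : ∀ k, 1 ≤ k → k ≤ m → a k = vv k ⬝ᵥ A *ᵥ vv k)
    (hu2 : u 2 = A *ᵥ vv 1 - a 1 • vv 1)
    (hu : ∀ k, 2 ≤ k → k + 1 ≤ m →
      u (k + 1) = A *ᵥ vv k - a k • vv k - b (k - 1) • vv (k - 1))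
    (hvk : ∀ k, 1 ≤ k → k + 1 ≤ m → vv (k + 1) = (b k)⁻¹ • u (k + 1)) :
    ∀ k, 1 ≤ k → k ≤ m → S *ᵥ vv k = (-1 : ℝ) ^ (k + 1) • vv k ∧ a k = c := by
  intro k
  induction k using Nat.strong_induction_on with
  | _ k ih =>
  intro hk hkm
  have hsign : S *ᵥ vv k = (-1 : ℝ) ^ (k + 1) • vv k := by
    match k, hk with
    | 1, _ => simpa using hSv
    | 2, _ =>
      obtain ⟨hS1, ha1⟩ := ih 1 (by omega) le_rfl (by omega)
      rw [hvk 1 le_rfl hkm, mulVec_smul, hu2, ha1, mulVec_sub_smul_of_mul_eq hSA hS1, smul_comm]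
      norm_num
    | j + 3, _ =>
      obtain ⟨hS1, -⟩ := ih (j + 1) (by omega) (by omega) (by omega)
      obtain ⟨hS2, ha2⟩ := ih (j + 2) (by omega) (by omega) (by omega)
      rw [hvk (j + 2) (by omega) hkm, mulVec_smul, hu (j + 2) (by omega) hkm, ha2,
        show j + 2 - 1 = j + 1 from rfl, mulVec_sub, mulVec_sub_smul_of_mul_eq hSA hS2,
        mulVec_smul, hS1, smul_comm]
      simp only [pow_succ]
      module
  exact ⟨hsign, (ha k hk hkm).trans <|
    dotProduct_mulVec_eq_of_mul_eq hS hSA (hunit k hk hkm) hsign (by simp)⟩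

lemma mem_spectrum_of_mulVec_eq_smul {ι K : Type*} [Fintype ι] [DecidableEq ι] [Field K]
    {T : Matrix ι ι K} {ρ : K} {x : ι → K} (hx0 : x ≠ 0) (hx : T *ᵥ x = ρ • x) :
    ρ ∈ spectrum K T := by
  rw [← spectrum_toLin']
  exact (Module.End.hasEigenvalue_of_hasEigenvector
    ⟨Module.End.mem_eigenspace_iff.mpr (by rwa [toLin'_apply]), hx0⟩).mem_spectrum

lemma Matrix.IsHermitian.exists_monotone_orthonormal_eigenpairs {m : ℕ}
    {T : Matrix (Fin m) (Fin m) ℝ} (hH : T.IsHermitian) :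
    ∃ (θ : Fin m → ℝ) (w : Fin m → Fin m → ℝ), Monotone θ ∧ Set.range θ = spectrum ℝ T ∧
      (∀ k, T *ᵥ w k = θ k • w k) ∧ (∀ k l, w k ⬝ᵥ w l = if k = l then 1 else 0) := by
  set σ := Tuple.sort hH.eigenvalues
  refine ⟨hH.eigenvalues ∘ σ, fun k => hH.eigenvectorBasis (σ k), Tuple.monotone_sort _, ?_,
    fun k => hH.mulVec_eigenvectorBasis (σ k), fun k l => ?_⟩
  · rw [hH.spectrum_real_eq_range_eigenvalues, EquivLike.range_comp]
  · have := orthonormal_iff_ite.mp hH.eigenvectorBasis.orthonormal (σ l) (σ k)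
    rw [EuclideanSpace.inner_eq_star_dotProduct] at this
    simpa [σ.injective.eq_iff, eq_comm] using this

lemma add_apply_rev_eq_of_strictMono {m : ℕ} {θ : Fin m → ℝ} {c : ℝ} (hθ : StrictMono θ)
    (h : ∀ k, ∃ l, θ l = c - θ k) (k : Fin m) : θ k + θ k.rev = c := by
  have hψ : StrictMono fun k : Fin m => c - θ k.rev := fun k l hkl => by
    simpa using hθ (Fin.rev_lt_rev.mpr hkl)
  have hrange : Set.range (fun k : Fin m => c - θ k.rev) = Set.range θ := by
    ext t
    constructor
    · rintro ⟨k, rfl⟩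
      obtain ⟨l, hl⟩ := h k.rev
      exact ⟨l, hl⟩
    · rintro ⟨k, rfl⟩
      obtain ⟨l, hl⟩ := h k
      exact ⟨l.rev, by simp [hl]⟩
  linarith [congrFun ((hψ.range_inj hθ).mp hrange) k]

section Tridiagonal

variable {m : ℕ} {T : Matrix (Fin m) (Fin m) ℝ}

lemma eq_zero_of_mulVec_eq_smul_of_apply_zero (hm : 0 < m)
    (hzero : ∀ i j : Fin m, (i : ℕ) + 1 < j → T i j = 0)
    (hsuper : ∀ i j : Fin m, (i : ℕ) + 1 = j → T i j ≠ 0)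
    {ρ : ℝ} {x : Fin m → ℝ} (hx : T *ᵥ x = ρ • x) (h0 : x ⟨0, hm⟩ = 0) : x = 0 := by
  suffices h : ∀ N, ∀ i : Fin m, (i : ℕ) ≤ N → x i = 0 from
    funext fun i => h i i le_rfl
  intro N
  induction N with
  | zero => exact fun i hi => by rwa [show i = ⟨0, hm⟩ from Fin.ext (Nat.le_zero.mp hi)]
  | succ N ih =>
    intro i hi
    rcases Nat.lt_or_ge (i : ℕ) (N + 1) with hlt | hge
    · exact ih i (Nat.lt_succ_iff.mp hlt)
    · set p : Fin m := ⟨N, by omega⟩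
      have hrow : T p i * x i = ρ * x p := by
        rw [← smul_eq_mul ρ, ← Pi.smul_apply, ← hx, mulVec, dotProduct]
        symm
        refine Finset.sum_eq_single i (fun j _ hj => ?_) (fun h => absurd (Finset.mem_univ i) h)
        rcases Nat.lt_or_ge (j : ℕ) (N + 1) with hj' | hj'
        · rw [ih j (by omega), mul_zero]
        · have hji := Fin.val_ne_of_ne hj
          rw [hzero p j (by simp only [p]; omega), zero_mul]
      rw [ih p le_rfl, mul_zero] at hrow
      exact (mul_eq_zero.mp hrow).resolve_left (hsuper p i (by simp [p]; omega))

lemma smul_eq_smul_of_mulVec_eq_smul (hm : 0 < m)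
    (hzero : ∀ i j : Fin m, (i : ℕ) + 1 < j → T i j = 0)
    (hsuper : ∀ i j : Fin m, (i : ℕ) + 1 = j → T i j ≠ 0)
    {ρ : ℝ} {x y : Fin m → ℝ} (hx : T *ᵥ x = ρ • x) (hy : T *ᵥ y = ρ • y) :
    y ⟨0, hm⟩ • x = x ⟨0, hm⟩ • y := by
  refine sub_eq_zero.mp (eq_zero_of_mulVec_eq_smul_of_apply_zero hm hzero hsuper (ρ := ρ) ?_ ?_)
  · rw [mulVec_sub, mulVec_smul, mulVec_smul, hx, hy, smul_sub, smul_comm ρ, smul_comm ρ]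
  · simp [mul_comm]

end Tridiagonal

def altSign (m : ℕ) : Matrix (Fin m) (Fin m) ℝ := diagonal fun i => (-1) ^ (i : ℕ)

section AltSign

variable {m : ℕ} {T : Matrix (Fin m) (Fin m) ℝ}

lemma altSign_mulVec_apply_zero (hm : 0 < m) (x : Fin m → ℝ) :
    (altSign m *ᵥ x) ⟨0, hm⟩ = x ⟨0, hm⟩ := by
  simp [altSign, mulVec_diagonal]

lemma altSign_mulVec_dotProduct_self (x : Fin m → ℝ) :
    altSign m *ᵥ x ⬝ᵥ altSign m *ᵥ x = x ⬝ᵥ x := by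
  simp only [altSign, mulVec_diagonal, dotProduct]
  refine Finset.sum_congr rfl fun i _ => ?_
  rw [mul_mul_mul_comm, ← pow_add, Even.neg_one_pow ⟨i, rfl⟩, one_mul]

lemma mul_altSign (hT : T.IsSymm) (hzero : ∀ i j : Fin m, (i : ℕ) + 1 < j → T i j = 0)
    {c : ℝ} (hdiag : ∀ i, T i i = c) : T * altSign m = altSign m * ((2 * c) • 1 - T) := by
  ext i j
  simp only [altSign, mul_diagonal, diagonal_mul, Matrix.sub_apply, Matrix.smul_apply,
    one_apply, smul_eq_mul]
  rcases lt_trichotomy (i : ℕ) j with h | h | h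
  · rw [if_neg (Fin.ne_of_lt h)]
    rcases Nat.lt_or_ge ((i : ℕ) + 1) j with h' | h'
    · simp [hzero i j h']
    · rw [show (j : ℕ) = i + 1 by omega, pow_succ]
      ring
  · rw [Fin.ext h, if_pos rfl, hdiag]
    ring
  · rw [if_neg (Fin.ne_of_gt h), ← hT.apply i j]
    rcases Nat.lt_or_ge ((j : ℕ) + 1) i with h' | h'
    · simp [hzero j i h']
    · rw [show (i : ℕ) = j + 1 by omega, pow_succ]
      ring

lemma mulVec_altSign_mulVec (hT : T.IsSymm) (hzero : ∀ i j : Fin m, (i : ℕ) + 1 < j → T i j = 0)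
    {c : ℝ} (hdiag : ∀ i, T i i = c) {ρ : ℝ} {x : Fin m → ℝ} (hx : T *ᵥ x = ρ • x) :
    T *ᵥ (altSign m *ᵥ x) = (2 * c - ρ) • (altSign m *ᵥ x) := by
  rw [mulVec_mulVec, mul_altSign hT hzero hdiag, ← mulVec_mulVec, sub_mulVec, smul_mulVec,
    one_mulVec, hx, ← sub_smul, mulVec_smul]

end AltSign

lemma exists_orthonormal_eigenpairs_reflected_of_tridiagonal {m : ℕ} (hm : 0 < m)
    {T : Matrix (Fin m) (Fin m) ℝ} (hT : T.IsSymm)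
    (hzero : ∀ i j : Fin m, (i : ℕ) + 1 < j → T i j = 0)
    (hsuper : ∀ i j : Fin m, (i : ℕ) + 1 = j → T i j ≠ 0) {c : ℝ} (hdiag : ∀ i, T i i = c) :
    ∃ (θ : Fin m → ℝ) (w : Fin m → Fin m → ℝ), Monotone θ ∧ (∀ k, T *ᵥ w k = θ k • w k) ∧
      (∀ k l, w k ⬝ᵥ w l = if k = l then 1 else 0) ∧
      ∀ k, θ k + θ k.rev = 2 * c ∧ w k ⟨0, hm⟩ ^ 2 = w k.rev ⟨0, hm⟩ ^ 2 := by
  obtain ⟨θ, w, hmono, hrange, heig, horth⟩ :=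
    (isHermitian_iff_isSymm.mpr hT).exists_monotone_orthonormal_eigenpairs
  have hflip : ∀ k, T *ᵥ (altSign m *ᵥ w k) = (2 * c - θ k) • (altSign m *ᵥ w k) :=
    fun k => mulVec_altSign_mulVec hT hzero hdiag (heig k)
  have hinj : Function.Injective θ := fun k l hkl => by
    by_contra hne
    have h := congrArg (· ⬝ᵥ w k)
      (smul_eq_smul_of_mulVec_eq_smul hm hzero hsuper (heig k) (hkl ▸ heig l))
    simp only [smul_dotProduct, horth, if_neg (Ne.symm hne), if_pos, smul_eq_mul, mul_one,
      mul_zero] at h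
    have hl := horth l l
    simp [eq_zero_of_mulVec_eq_smul_of_apply_zero hm hzero hsuper (heig l) h] at hl
  have hadd : ∀ k, θ k + θ k.rev = 2 * c := by
    refine add_apply_rev_eq_of_strictMono (hmono.strictMono_of_injective hinj) fun k => ?_
    have hne : altSign m *ᵥ w k ≠ 0 := fun h => by
      simpa [h] using (altSign_mulVec_dotProduct_self (w k)).trans (horth k k)
    rw [← Set.mem_range, hrange]
    exact mem_spectrum_of_mulVec_eq_smul hne (hflip k)
  refine ⟨θ, w, hmono, heig, horth, fun k => ⟨hadd k, ?_⟩⟩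
  have hk : T *ᵥ (altSign m *ᵥ w k) = θ k.rev • (altSign m *ᵥ w k) := by
    rw [hflip, show 2 * c - θ k = θ k.rev by linarith [hadd k]]
  have h := congrArg (fun z => z ⬝ᵥ z)
    (smul_eq_smul_of_mulVec_eq_smul hm hzero hsuper hk (heig k.rev))
  simp only [smul_dotProduct, dotProduct_smul, smul_eq_mul, altSign_mulVec_dotProduct_self,
    altSign_mulVec_apply_zero, horth, if_pos] at h
  linarith

-- `a` and `b` are indexed from `1`, as in the Lanczos recurrence.
def jacobiMatrix (m : ℕ) (a b : ℕ → ℝ) : Matrix (Fin m) (Fin m) ℝ :=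
  of fun i j =>
    if (i : ℕ) = (j : ℕ) then a ((i : ℕ) + 1)
    else if (i : ℕ) + 1 = (j : ℕ) then b ((i : ℕ) + 1)
    else if (j : ℕ) + 1 = (i : ℕ) then b ((j : ℕ) + 1)
    else 0

section JacobiMatrix

variable {m : ℕ} {a b : ℕ → ℝ}

lemma jacobiMatrix_isSymm : (jacobiMatrix m a b).IsSymm := by
  refine IsSymm.ext fun i j => ?_
  simp only [jacobiMatrix, of_apply]
  by_cases h : (i : ℕ) = j
  · simp [h]
  · simp only [h, Ne.symm h, if_false]
    split_ifs <;> first | rfl | omega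

lemma jacobiMatrix_apply_self (i : Fin m) : jacobiMatrix m a b i i = a (i + 1) := by
  simp [jacobiMatrix]

lemma jacobiMatrix_apply_of_add_one_lt {i j : Fin m} (h : (i : ℕ) + 1 < j) :
    jacobiMatrix m a b i j = 0 := by
  simp only [jacobiMatrix, of_apply]
  split_ifs <;> first | rfl | omega

lemma jacobiMatrix_apply_of_add_one_eq {i j : Fin m} (h : (i : ℕ) + 1 = j) :
    jacobiMatrix m a b i j = b (i + 1) := by
  simp only [jacobiMatrix, of_apply]
  split_ifs <;> first | rfl | omega

end JacobiMatrix

theorem stmt13_general (n m : ℕ) (hm : 1 ≤ m)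
    (Q : Matrix (Fin n) (Fin n) ℝ) (hQ : Qᵀ * Q = 1)
    (lam : Fin n → ℝ)
    (lamBar : ℝ) (hsym : ∀ j : Fin n, lam j + lam j.rev = 2 * lamBar)
    (A : Matrix (Fin n) (Fin n) ℝ) (hA : A = Q * Matrix.diagonal lam * Qᵀ)
    (v : Fin n → ℝ)
    (hpal : AbsPalindrome (Qᵀ.mulVec v))
    -- the Lanczos recurrence (1-based indexing `k = 1, …, m`)
    (vv u : ℕ → Fin n → ℝ) (a b : ℕ → ℝ)
    (hv1 : vv 1 = v)
    (hunit : ∀ k, 1 ≤ k → k ≤ m → vv k ⬝ᵥ vv k = 1)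
    (ha : ∀ k, 1 ≤ k → k ≤ m → a k = vv k ⬝ᵥ A.mulVec (vv k))
    (hu2 : u 2 = A.mulVec (vv 1) - a 1 • vv 1)
    (hu : ∀ k, 2 ≤ k → k + 1 ≤ m →
      u (k + 1) = A.mulVec (vv k) - a k • vv k - b (k - 1) • vv (k - 1))
    (hbne : ∀ k, 1 ≤ k → k + 1 ≤ m → b k ≠ 0)
    (hvk : ∀ k, 1 ≤ k → k + 1 ≤ m → vv (k + 1) = (b k)⁻¹ • u (k + 1))
    -- the Jacobi matrix `T_m`
    (T : Matrix (Fin m) (Fin m) ℝ)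
    (hT : ∀ i j : Fin m, T i j =
      if (i : ℕ) = (j : ℕ) then a ((i : ℕ) + 1)
      else if (i : ℕ) + 1 = (j : ℕ) then b ((i : ℕ) + 1)
      else if (j : ℕ) + 1 = (i : ℕ) then b ((j : ℕ) + 1)
      else 0) :
    ∃ (θ : Fin m → ℝ) (w : Fin m → Fin m → ℝ),
      Monotone θ ∧
      (∀ k : Fin m, T.mulVec (w k) = θ k • w k) ∧
      (∀ k l : Fin m, w k ⬝ᵥ w l = if k = l then 1 else 0) ∧
      (∀ k : Fin m, θ k + θ k.rev = 2 * lamBar ∧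
        (w k ⟨0, hm⟩) ^ 2 = (w k.rev ⟨0, hm⟩) ^ 2) := by
  subst hA hv1
  obtain ⟨S, hS, hSA, hSv⟩ := exists_reflection_of_absPalindrome hQ hsym hpal
  have hdiag (k : ℕ) (hk : 1 ≤ k) (hkm : k ≤ m) : a k = lamBar :=
    (lanczos_mulVec_eq_neg_one_pow_and_eq hS hSA hSv hunit ha hu2 hu hvk k hk hkm).2
  obtain rfl : T = jacobiMatrix m a b := Matrix.ext hT
  exact exists_orthonormal_eigenpairs_reflected_of_tridiagonal hm jacobiMatrix_isSymm
    (fun i j => jacobiMatrix_apply_of_add_one_lt)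
    (fun i j h => by rw [jacobiMatrix_apply_of_add_one_eq h]; exact hbne _ le_add_self (by omega))
    (fun i => by rw [jacobiMatrix_apply_self, hdiag _ le_add_self i.isLt])

/-- Main theorem: if `A = QΛQᵀ` has eigenvalues symmetric about `λ̄` and
`μ = Qᵀv` is an absolute palindrome, then the Ritz values (eigenvalues of the
Jacobi matrix `T_m` of the `m`-step Lanczos method) are symmetric about `λ̄`,
and the quadrature weights of symmetric pairs of nodes are equal: there is a
nondecreasing listing `θ_1 ≤ … ≤ θ_m` of the eigenvalues of `T_m` with
orthonormal eigenvectors `w_1, …, w_m` such that `θ_k + θ_{m+1-k} = 2λ̄` and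
`((w_k)_1)² = ((w_{m+1-k})_1)²` for all `k`. -/
theorem stmt13 (n m : ℕ) (hm : 1 ≤ m) (hmn : m ≤ n)
    (Q : Matrix (Fin n) (Fin n) ℝ) (hQ : Qᵀ * Q = 1)
    (lam : Fin n → ℝ) (hmono : Monotone lam)
    (lamBar : ℝ) (hsym : ∀ j : Fin n, lam j + lam j.rev = 2 * lamBar)
    (A : Matrix (Fin n) (Fin n) ℝ) (hA : A = Q * Matrix.diagonal lam * Qᵀ)
    (v : Fin n → ℝ) (hv : v ⬝ᵥ v = 1)
    (hpal : AbsPalindrome (Qᵀ.mulVec v))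
    -- the Lanczos recurrence (1-based indexing `k = 1, …, m`)
    (vv u : ℕ → Fin n → ℝ) (a b : ℕ → ℝ)
    (hv1 : vv 1 = v)
    (hunit : ∀ k, 1 ≤ k → k ≤ m → vv k ⬝ᵥ vv k = 1)
    (ha : ∀ k, 1 ≤ k → k ≤ m → a k = vv k ⬝ᵥ A.mulVec (vv k))
    (hu2 : u 2 = A.mulVec (vv 1) - a 1 • vv 1)
    (hu : ∀ k, 2 ≤ k → k + 1 ≤ m →
      u (k + 1) = A.mulVec (vv k) - a k • vv k - b (k - 1) • vv (k - 1))
    (hb : ∀ k, 1 ≤ k → k + 1 ≤ m → b k = Real.sqrt (u (k + 1) ⬝ᵥ u (k + 1)))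
    (hbne : ∀ k, 1 ≤ k → k + 1 ≤ m → b k ≠ 0)
    (hvk : ∀ k, 1 ≤ k → k + 1 ≤ m → vv (k + 1) = (b k)⁻¹ • u (k + 1))
    -- the Jacobi matrix `T_m`
    (T : Matrix (Fin m) (Fin m) ℝ)
    (hT : ∀ i j : Fin m, T i j =
      if (i : ℕ) = (j : ℕ) then a ((i : ℕ) + 1)
      else if (i : ℕ) + 1 = (j : ℕ) then b ((i : ℕ) + 1)
      else if (j : ℕ) + 1 = (i : ℕ) then b ((j : ℕ) + 1)
      else 0) :
    ∃ (θ : Fin m → ℝ) (w : Fin m → Fin m → ℝ),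
      Monotone θ ∧
      (∀ k : Fin m, T.mulVec (w k) = θ k • w k) ∧
      (∀ k l : Fin m, w k ⬝ᵥ w l = if k = l then 1 else 0) ∧
      (∀ k : Fin m, θ k + θ k.rev = 2 * lamBar ∧
        (w k ⟨0, hm⟩) ^ 2 = (w k.rev ⟨0, hm⟩) ^ 2) :=
  stmt13_general n m hm Q hQ lam lamBar hsym A hA v hpal vv u a b hv1 hunit ha hu2 hu hbne hvk T hT
end

section
/- Let κ > 1 be a real number, let ρ = (√κ + 1)/(√κ − 1), and define m* = log(1 + ρ⁻¹)/(2 log ρ). Then (√κ − 1)²/(8√κ) ≤ m* ≤ (√κ − 1)/4. -/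
/-!
Write `ρ = (√κ + 1)/(√κ - 1) > 1`. The elementary bounds `1 - x⁻¹ ≤ log x ≤ x - 1`, applied to
`x = 1 + ρ⁻¹` and to `x = ρ`, squeeze `m*` between `1/(2(ρ² - 1))` and `1/(2(ρ - 1))`, and these
two quantities are exactly `(√κ - 1)²/(8√κ)` and `(√κ - 1)/4`.
-/

open Real

lemma one_div_two_mul_sq_sub_one_le_log_one_add_inv_div {ρ : ℝ} (hρ : 1 < ρ) :
    1 / (2 * (ρ ^ 2 - 1)) ≤ log (1 + ρ⁻¹) / (2 * log ρ) := by
  have hρ0 : 0 < ρ := by linarith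
  have hnum : 1 / (ρ + 1) ≤ log (1 + ρ⁻¹) := by
    have h := one_sub_inv_le_log_of_pos (x := 1 + ρ⁻¹) (by positivity)
    have h_eq : 1 - (1 + ρ⁻¹)⁻¹ = 1 / (ρ + 1) := by field_simp; ring
    rwa [h_eq] at h
  have hden : log ρ ≤ ρ - 1 := log_le_sub_one_of_pos hρ0
  have hρ1 : ρ - 1 ≠ 0 := by linarith
  have hρ2 : ρ ^ 2 - 1 ≠ 0 := by nlinarith
  calc 1 / (2 * (ρ ^ 2 - 1)) = (1 / (ρ + 1)) / (2 * (ρ - 1)) := by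
        field_simp; ring
    _ ≤ log (1 + ρ⁻¹) / (2 * log ρ) :=
        div_le_div₀ ((one_div_pos.2 (by linarith)).le.trans hnum) hnum
          (by linarith [log_pos hρ]) (by linarith)

lemma log_one_add_inv_div_le_one_div_two_mul_sub_one {ρ : ℝ} (hρ : 1 < ρ) :
    log (1 + ρ⁻¹) / (2 * log ρ) ≤ 1 / (2 * (ρ - 1)) := by
  have hρ0 : 0 < ρ := by linarith
  have hnum : log (1 + ρ⁻¹) ≤ ρ⁻¹ := by
    linarith [log_le_sub_one_of_pos (x := 1 + ρ⁻¹) (by positivity)]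
  have hden : 1 - ρ⁻¹ ≤ log ρ := one_sub_inv_le_log_of_pos hρ0
  have hρinv : ρ⁻¹ < 1 := inv_lt_one_of_one_lt₀ hρ
  have hρ1 : ρ - 1 ≠ 0 := by linarith
  calc log (1 + ρ⁻¹) / (2 * log ρ) ≤ ρ⁻¹ / (2 * (1 - ρ⁻¹)) :=
        div_le_div₀ (inv_nonneg.2 hρ0.le) hnum (by linarith) (by linarith)
    _ = 1 / (2 * (ρ - 1)) := by field_simp

/-- Bounds on the iteration gap `m* = log(1 + ρ⁻¹)/(2 log ρ)` with
`ρ = (√κ + 1)/(√κ - 1)`: `(√κ - 1)²/(8√κ) ≤ m* ≤ (√κ - 1)/4`. -/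
theorem stmt15 (κ : ℝ) (hκ : 1 < κ) (ρ : ℝ)
    (hρ : ρ = (Real.sqrt κ + 1) / (Real.sqrt κ - 1))
    (mstar : ℝ) (hm : mstar = Real.log (1 + ρ⁻¹) / (2 * Real.log ρ)) :
    (Real.sqrt κ - 1) ^ 2 / (8 * Real.sqrt κ) ≤ mstar ∧
    mstar ≤ (Real.sqrt κ - 1) / 4 := by
  have hs : 1 < √κ := Real.lt_sqrt_of_sq_lt (by linarith)
  subst hm
  generalize √κ = s at hs hρ ⊢
  have hs0 : s ≠ 0 := by linarith
  have hs1 : s - 1 ≠ 0 := by linarith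
  have hρ1 : 1 < ρ := by
    rw [hρ, one_lt_div (by linarith)]
    linarith
  constructor
  · have hρsq : ρ ^ 2 - 1 = 4 * s / (s - 1) ^ 2 := by
      rw [hρ]; field_simp; ring
    calc (s - 1) ^ 2 / (8 * s) = 1 / (2 * (ρ ^ 2 - 1)) := by
          rw [hρsq]; field_simp; ring
      _ ≤ _ := one_div_two_mul_sq_sub_one_le_log_one_add_inv_div hρ1
  · calc _ ≤ 1 / (2 * (ρ - 1)) := log_one_add_inv_div_le_one_div_two_mul_sub_one hρ1
      _ = (s - 1) / 4 := by
          rw [hρ]; field_simp; ring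
end
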